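/- arXiv:0807.0142 — 3 statements merged into one kernel-verified Lean document; each statement's English description precedes it below -/
import Mathlib

section
/- Let φ be an element of the integral closure of the ideal 𝔞^ν in the ring of germs of holomorphic functions at 0 ∈ ℂⁿ, where 𝔞 is generated by f₁,…,f_m. Then there exists a constant C > 0 and a neighborhood U of 0 such that |φ(z)| ≤ C·(|f₁(z)| + ⋯ + |f_m(z)|)^ν for all z ∈ U. -/
/-!
STATEMENT 1: If φ is in the integral closure of 𝔞^ν, where 𝔞 = (f₁,…,f_m) ⊆ 𝒪₀,
then |φ(z)| ≤ C (|f₁(z)| + ⋯ + |f_m(z)|)^ν near 0.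
-/

noncomputable section
open Filter Metric

/-- The ring of germs at `0 ∈ ℂⁿ` of holomorphic functions. -/
def HoloGerm (n : ℕ) : Subring (Filter.Germ (nhds (0 : Fin n → ℂ)) ℂ) where
  carrier := {φ | ∃ f : (Fin n → ℂ) → ℂ, AnalyticAt ℂ f 0 ∧ φ = ↑f}
  mul_mem' := by rintro a b ⟨f, hf, rfl⟩ ⟨g, hg, rfl⟩; exact ⟨f * g, hf.mul hg, rfl⟩
  one_mem' := ⟨1, analyticAt_const, rfl⟩
  add_mem' := by rintro a b ⟨f, hf, rfl⟩ ⟨g, hg, rfl⟩; exact ⟨f + g, hf.add hg, rfl⟩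
  zero_mem' := ⟨0, analyticAt_const, rfl⟩
  neg_mem' := by rintro a ⟨f, hf, rfl⟩; exact ⟨-f, hf.neg, rfl⟩

/-- Integral dependence of `φ` over the ideal `I`. -/
def IsIntegralOverIdeal {R : Type*} [CommRing R] (I : Ideal R) (φ : R) : Prop :=
  ∃ N : ℕ, 0 < N ∧ ∃ a : ℕ → R,
    (∀ k, 1 ≤ k → k ≤ N → a k ∈ I ^ k) ∧
    φ ^ N + ∑ k ∈ Finset.Icc 1 N, a k * φ ^ (N - k) = 0

/-!
Near `0` every holomorphic germ is bounded and each generator satisfies `|fᵢ| ≤ S := Σ |fᵢ|`,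
so every element of `𝔞 ^ p` is `O(S ^ p)`. The coefficients of the equation of integral
dependence of `φ` lie in `(𝔞 ^ ν) ^ k`, hence are `O((S ^ ν) ^ k)`, and the Cauchy bound for
the roots of a monic polynomial (if `|a k| ≤ c k * v ^ k`, every root has modulus at most
`(1 + Σ c k) * v`) gives `φ = O(S ^ ν)`.
-/

open Finset Asymptotics

theorem le_mul_of_pow_le_sum_mul_pow {N : ℕ} {t v : ℝ} {c : ℕ → ℝ} (hv : 0 ≤ v)
    (hc : ∀ k ∈ Icc 1 N, 0 ≤ c k) (h : t ^ N ≤ ∑ k ∈ Icc 1 N, c k * v ^ k * t ^ (N - k)) :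
    t ≤ (1 + ∑ k ∈ Icc 1 N, c k) * v := by
  set M := 1 + ∑ k ∈ Icc 1 N, c k
  have hsum : 0 ≤ ∑ k ∈ Icc 1 N, c k := sum_nonneg hc
  have hM : 1 ≤ M := le_add_of_nonneg_right hsum
  by_contra! hlt
  have ht0 : 0 < t := (mul_nonneg (by linarith) hv).trans_lt hlt
  have hvt : v ≤ t / M := (le_div_iff₀ (by linarith)).2 (by linarith)
  have hterm : ∀ k ∈ Icc 1 N, c k * v ^ k * t ^ (N - k) ≤ c k / M * t ^ N := by
    intro k hk
    obtain ⟨hk1, hkN⟩ := mem_Icc.1 hk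
    have htN : t ^ N = t ^ k * t ^ (N - k) := by rw [← pow_add, Nat.add_sub_cancel' hkN]
    have hck := hc k hk
    calc c k * v ^ k * t ^ (N - k) ≤ c k * (t / M) ^ k * t ^ (N - k) := by gcongr
      _ = c k / M ^ k * t ^ N := by rw [htN, div_pow]; ring
      _ ≤ c k / M * t ^ N := by gcongr; exact le_self_pow₀ hM (by omega)
  have hlt1 : (∑ k ∈ Icc 1 N, c k) / M < 1 := (div_lt_one (by linarith)).2 (by linarith)
  have : t ^ N ≤ (∑ k ∈ Icc 1 N, c k) / M * t ^ N :=
    h.trans ((sum_le_sum hterm).trans_eq (by rw [← sum_mul, ← sum_div]))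
  nlinarith [pow_pos ht0 N]

theorem norm_le_of_monic_eq_zero {𝕜 : Type*} [NormedDivisionRing 𝕜] {N : ℕ} {x : 𝕜} {a : ℕ → 𝕜}
    {c : ℕ → ℝ} {v : ℝ} (hv : 0 ≤ v) (hc : ∀ k ∈ Icc 1 N, 0 ≤ c k)
    (hroot : x ^ N + ∑ k ∈ Icc 1 N, a k * x ^ (N - k) = 0)
    (ha : ∀ k ∈ Icc 1 N, ‖a k‖ ≤ c k * v ^ k) :
    ‖x‖ ≤ (1 + ∑ k ∈ Icc 1 N, c k) * v := by
  refine le_mul_of_pow_le_sum_mul_pow hv hc ?_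
  calc ‖x‖ ^ N = ‖∑ k ∈ Icc 1 N, a k * x ^ (N - k)‖ := by
        rw [← norm_pow, eq_neg_of_add_eq_zero_left hroot, norm_neg]
    _ ≤ ∑ k ∈ Icc 1 N, ‖a k‖ * ‖x‖ ^ (N - k) := by
        simpa only [norm_mul, norm_pow] using norm_sum_le (Icc 1 N) fun k => a k * x ^ (N - k)
    _ ≤ ∑ k ∈ Icc 1 N, c k * v ^ k * ‖x‖ ^ (N - k) :=
        sum_le_sum fun k hk => by gcongr; exact ha k hk

theorem isBigO_of_monic_eventuallyEq_zero {α 𝕜 : Type*} [NormedDivisionRing 𝕜] {l : Filter α}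
    {N : ℕ} {x : α → 𝕜} {a : ℕ → α → 𝕜} {g : α → ℝ}
    (hroot : x ^ N + ∑ k ∈ Icc 1 N, a k * x ^ (N - k) =ᶠ[l] 0)
    (ha : ∀ k ∈ Icc 1 N, a k =O[l] (g ^ k)) : x =O[l] g := by
  have hbound : ∀ k, ∃ c ≥ 0, ∀ᶠ z in l, k ∈ Icc 1 N → ‖a k z‖ ≤ c * ‖g z‖ ^ k := by
    intro k
    by_cases hk : k ∈ Icc 1 N
    · obtain ⟨c, hc, hO⟩ := (ha k hk).exists_nonneg
      exact ⟨c, hc, hO.bound.mono fun z hz _ => by simpa only [Pi.pow_apply, norm_pow] using hz⟩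
    · exact ⟨0, le_rfl, .of_forall fun _ hk' => absurd hk' hk⟩
  choose c hc hca using hbound
  refine .of_bound (1 + ∑ k ∈ Icc 1 N, c k) ?_
  filter_upwards [hroot, (eventually_all_finset _).2 fun k _ => hca k] with z hz hzk
  refine norm_le_of_monic_eq_zero (norm_nonneg _) (fun k _ => hc k) ?_ fun k hk => hzk k hk hk
  simpa only [Pi.add_apply, Finset.sum_apply, Pi.mul_apply, Pi.pow_apply, Pi.zero_apply] using hz

namespace Filter.Germ

variable {α E 𝕜 : Type*} {l : Filter α}

def IsBigO [Norm E] (x : Germ l E) (g : α → ℝ) : Prop :=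
  x.liftOn (· =O[l] g) fun _ _ h => propext (isBigO_congr h .rfl)

@[simp]
theorem isBigO_coe [Norm E] {u : α → E} {g : α → ℝ} : (u : Germ l E).IsBigO g ↔ u =O[l] g :=
  Iff.rfl

theorem isBigO_zero [SeminormedAddCommGroup E] (g : α → ℝ) : (0 : Germ l E).IsBigO g :=
  Asymptotics.isBigO_zero g l

theorem IsBigO.add [SeminormedAddCommGroup E] {x y : Germ l E} {g : α → ℝ} (hx : x.IsBigO g)
    (hy : y.IsBigO g) : (x + y).IsBigO g := by
  induction x using inductionOn
  induction y using inductionOn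
  exact Asymptotics.IsBigO.add hx hy

theorem IsBigO.mul [SeminormedRing 𝕜] {x y : Germ l 𝕜} {g₁ g₂ : α → ℝ} (hx : x.IsBigO g₁)
    (hy : y.IsBigO g₂) : (x * y).IsBigO (g₁ * g₂) := by
  induction x using inductionOn
  induction y using inductionOn
  exact Asymptotics.IsBigO.mul hx hy

theorem IsBigO.of_monic_eq_zero [NormedDivisionRing 𝕜] {N : ℕ} {x : Germ l 𝕜}
    {a : ℕ → Germ l 𝕜} {g : α → ℝ} (hroot : x ^ N + ∑ k ∈ Icc 1 N, a k * x ^ (N - k) = 0)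
    (ha : ∀ k ∈ Icc 1 N, (a k).IsBigO (g ^ k)) : x.IsBigO g := by
  induction x using inductionOn with | h x => ?_
  choose u hu using fun k => Quotient.exists_rep (a k)
  obtain rfl : a = fun k => (u k : Germ l 𝕜) := funext fun k => (hu k).symm
  refine isBigO_of_monic_eventuallyEq_zero (coe_eq.1 ?_) ha
  simpa only [← coe_coeRingHom, map_add, map_sum, map_mul, map_pow, map_zero] using hroot

section Ideal

variable [SeminormedCommRing 𝕜] (R : Subring (Germ l 𝕜))

def bigOIdeal (hR : ∀ x ∈ R, x.IsBigO 1) (g : α → ℝ) : Ideal R where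
  carrier := {x | (x : Germ l 𝕜).IsBigO g}
  add_mem' hx hy := hx.add hy
  zero_mem' := isBigO_zero g
  smul_mem' r x hx := show (r * x : Germ l 𝕜).IsBigO g by
    simpa only [one_mul] using (hR r r.2).mul hx

theorem span_pow_le_bigOIdeal (hR : ∀ x ∈ R, x.IsBigO 1) {S : Set R} {g : α → ℝ}
    (hS : ∀ s ∈ S, (s : Germ l 𝕜).IsBigO g) (p : ℕ) :
    Ideal.span S ^ p ≤ bigOIdeal R hR (g ^ p) := by
  induction p with
  | zero =>
    intro x _
    show (x : Germ l 𝕜).IsBigO (g ^ 0)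
    simpa only [pow_zero] using hR x x.2
  | succ p ih =>
    rw [pow_succ]
    refine Ideal.mul_le.2 fun x hx y hy => ?_
    show (x * y : Germ l 𝕜).IsBigO (g ^ (p + 1))
    have hy' : (y : Germ l 𝕜).IsBigO g := (Ideal.span_le (I := bigOIdeal R hR g)).2 hS hy
    simpa only [pow_succ] using (ih hx).mul hy'

end Ideal

end Filter.Germ

open Filter.Germ

theorem isBigO_one_of_mem_holoGerm {n : ℕ} : ∀ x ∈ HoloGerm n, x.IsBigO 1 := by
  rintro _ ⟨f, hf, rfl⟩
  exact hf.continuousAt.tendsto.isBigO_one ℝ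

theorem integral_closure_size_estimate_general (n m ν : ℕ)
    (φ : (Fin n → ℂ) → ℂ) (hφ : AnalyticAt ℂ φ 0)
    (f : Fin m → (Fin n → ℂ) → ℂ) (hf : ∀ i, AnalyticAt ℂ (f i) 0)
    (hint : IsIntegralOverIdeal
      ((Ideal.span (Set.range fun i => (⟨↑(f i), f i, hf i, rfl⟩ : HoloGerm n))) ^ ν)
      (⟨↑φ, φ, hφ, rfl⟩ : HoloGerm n)) :
    ∃ C > (0 : ℝ), ∃ r > (0 : ℝ), ∀ z ∈ ball (0 : Fin n → ℂ) r,
      ‖φ z‖ ≤ C * (∑ i, ‖f i z‖) ^ ν := by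
  set S : (Fin n → ℂ) → ℝ := fun z => ∑ i, ‖f i z‖
  have hS : ∀ z, 0 ≤ S z := fun z => sum_nonneg fun i _ => norm_nonneg _
  have hgen : ∀ s ∈ Set.range fun i => (⟨↑(f i), f i, hf i, rfl⟩ : HoloGerm n),
      (s : Germ (nhds (0 : Fin n → ℂ)) ℂ).IsBigO S := by
    rintro _ ⟨i, rfl⟩
    refine Asymptotics.IsBigO.of_bound' (.of_forall fun z => ?_)
    rw [Real.norm_of_nonneg (hS z)]
    exact single_le_sum (f := fun j => ‖f j z‖) (fun j _ => norm_nonneg _) (mem_univ i)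
  obtain ⟨N, -, a, ha, hroot⟩ := hint
  have hφS : (φ : Germ (nhds (0 : Fin n → ℂ)) ℂ).IsBigO (S ^ ν) := by
    refine IsBigO.of_monic_eq_zero (a := fun k => a k) (by simpa using congrArg Subtype.val hroot)
      fun k hk => ?_
    rw [← pow_mul]
    refine span_pow_le_bigOIdeal _ isBigO_one_of_mem_holoGerm hgen (ν * k) ?_
    rw [pow_mul]
    exact ha k (mem_Icc.1 hk).1 (mem_Icc.1 hk).2
  obtain ⟨C, hC, hCφ⟩ := (isBigO_coe.1 hφS).exists_pos
  obtain ⟨r, hr, hball⟩ := Metric.eventually_nhds_iff_ball.1 hCφ.bound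
  refine ⟨C, hC, r, hr, fun z hz => ?_⟩
  simpa only [Pi.pow_apply, norm_pow, Real.norm_of_nonneg (hS z)] using hball z hz

theorem integral_closure_size_estimate (n m ν : ℕ) (hν : 0 < ν)
    (φ : (Fin n → ℂ) → ℂ) (hφ : AnalyticAt ℂ φ 0)
    (f : Fin m → (Fin n → ℂ) → ℂ) (hf : ∀ i, AnalyticAt ℂ (f i) 0)
    (hint : IsIntegralOverIdeal
      ((Ideal.span (Set.range fun i => (⟨↑(f i), f i, hf i, rfl⟩ : HoloGerm n))) ^ ν)
      (⟨↑φ, φ, hφ, rfl⟩ : HoloGerm n)) :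
    ∃ C > (0 : ℝ), ∃ r > (0 : ℝ), ∀ z ∈ ball (0 : Fin n → ℂ) r,
      ‖φ z‖ ≤ C * (∑ i, ‖f i z‖) ^ ν :=
  integral_closure_size_estimate_general n m ν φ hφ f hf hint
end
end

section
/- Let p ∈ ℂ[z] be a monic polynomial of degree s in one variable with roots r₁,…,r_s in a disk D. For any δ with 0 < δ < 1/s, the function z ↦ 1/|p(z)|^δ is integrable on D. (This is the one-variable slice estimate used to prove integrability of 1/|F|^δ via the Weierstrass preparation theorem.) -/
/-!
By AM-GM, `∏ⱼ |z - rⱼ|^(-δ) ≤ ∑ⱼ |z - rⱼ|^(-sδ)`, and each `|z - rⱼ|^(-sδ)` is locally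
integrable on the plane because `sδ < 1 < 2 = dim_ℝ ℂ`. So `1 / |p|^δ` is locally integrable
on `ℂ`, hence integrable on every disk.
-/

open MeasureTheory Module Metric

theorem Real.prod_rpow_le_sum_rpow_card_mul {ι : Type*} [Fintype ι] [Nonempty ι] {a : ι → ℝ}
    (ha : ∀ i, 0 ≤ a i) (t : ℝ) : ∏ i, a i ^ t ≤ ∑ i, a i ^ ((Fintype.card ι : ℝ) * t) := by
  set n : ℝ := (Fintype.card ι : ℝ)
  have hn : 1 ≤ n := Nat.one_le_cast.2 Fintype.card_pos
  have hz : ∀ i ∈ Finset.univ, 0 ≤ a i ^ (n * t) := fun i _ => Real.rpow_nonneg (ha i) _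
  calc ∏ i, a i ^ t = ∏ i, (a i ^ (n * t)) ^ n⁻¹ := by
        refine Finset.prod_congr rfl fun i _ => ?_
        rw [← Real.rpow_mul (ha i), mul_comm n, mul_inv_cancel_right₀ (by positivity)]
    _ ≤ ∑ i, n⁻¹ * a i ^ (n * t) :=
        Real.geom_mean_le_arith_mean_weighted _ _ _ (fun _ _ => by positivity)
          (by simp [n]) hz
    _ ≤ ∑ i, a i ^ (n * t) :=
        Finset.sum_le_sum fun i hi => mul_le_of_le_one_left (hz i hi) (inv_le_one_of_one_le₀ hn)

section HaarMeasure

variable {E : Type*} [NormedAddCommGroup E] [NormedSpace ℝ E] [FiniteDimensional ℝ E]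
  [MeasurableSpace E] [BorelSpace E] {μ : Measure E} [μ.IsAddHaarMeasure]

theorem locallyIntegrable_norm_sub_rpow_neg (hd : 1 ≤ finrank ℝ E) (a : E) {α : ℝ}
    (hα : α < finrank ℝ E) : LocallyIntegrable (fun x => ‖x - a‖ ^ (-α)) μ := by
  have h₀ : LocallyIntegrable (fun x : E => ‖x‖ ^ (-α)) μ :=
    locallyIntegrable_of_norm_le_rpow (C := 1) hd hα
      (.of_forall fun x => by simp [Real.norm_of_nonneg (Real.rpow_nonneg (norm_nonneg x) _)])
      (continuous_norm.measurable.pow_const _).aestronglyMeasurable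
  rw [← map_add_right_eq_self μ (-a)] at h₀
  simpa [Function.comp_def, ← sub_eq_add_neg] using
    (locallyIntegrable_map_homeomorph (Homeomorph.addRight (-a))).1 h₀

theorem locallyIntegrable_prod_norm_sub_rpow_neg {ι : Type*} [Fintype ι]
    (hd : 1 ≤ finrank ℝ E) (r : ι → E) {δ : ℝ} (hδ : Fintype.card ι * δ < finrank ℝ E) :
    LocallyIntegrable (fun x => ∏ i, ‖x - r i‖ ^ (-δ)) μ := by
  cases isEmpty_or_nonempty ι
  · simpa using locallyIntegrable_const (1 : ℝ)
  have hsum : LocallyIntegrable (fun x => ∑ i, ‖x - r i‖ ^ (-(Fintype.card ι * δ))) μ :=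
    locallyIntegrable_finsetSum _ fun i _ => locallyIntegrable_norm_sub_rpow_neg hd (r i) hδ
  refine hsum.mono ?_ (.of_forall fun x => ?_)
  · exact (Finset.measurable_prod _ fun i _ =>
      (measurable_id.sub_const _).norm.pow_const _).aestronglyMeasurable
  · have hnn : ∀ i, 0 ≤ ‖x - r i‖ := fun i => norm_nonneg _
    rw [Real.norm_of_nonneg (Finset.prod_nonneg fun i _ => Real.rpow_nonneg (hnn i) _),
      Real.norm_of_nonneg (Finset.sum_nonneg fun i _ => Real.rpow_nonneg (hnn i) _)]
    simpa only [mul_neg] using Real.prod_rpow_le_sum_rpow_card_mul hnn (-δ)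

end HaarMeasure

theorem integrable_inv_abs_monic_poly_rpow_general (s : ℕ) (r : Fin s → ℂ)
    (c : ℂ) (R : ℝ)
    (δ : ℝ) (hδ : δ < 1 / s) :
    IntegrableOn (fun z : ℂ => 1 / ‖∏ j, (z - r j)‖ ^ δ)
      (ball c R) volume := by
  have hsδ : (Fintype.card (Fin s) : ℝ) * δ < finrank ℝ ℂ := by
    rw [Fintype.card_fin, Complex.finrank_real_complex]
    rcases s.eq_zero_or_pos with rfl | hs
    · norm_num
    · have hs' : (0 : ℝ) < s := Nat.cast_pos.2 hs
      calc (s : ℝ) * δ < s * (1 / s) := mul_lt_mul_of_pos_left hδ hs'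
        _ = 1 := mul_one_div_cancel hs'.ne'
        _ < (2 : ℕ) := by norm_num
  have hloc := locallyIntegrable_prod_norm_sub_rpow_neg (μ := volume) (by simp) r hsδ
  refine ((hloc.integrableOn_isCompact (isCompact_closedBall c R)).mono_set
    ball_subset_closedBall).congr_fun (fun z _ => ?_) measurableSet_ball
  dsimp only
  rw [one_div, norm_prod, Real.finsetProd_rpow _ _ (fun j _ => norm_nonneg _),
    Real.rpow_neg (Finset.prod_nonneg fun j _ => norm_nonneg _)]

theorem integrable_inv_abs_monic_poly_rpow (s : ℕ) (r : Fin s → ℂ)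
    (c : ℂ) (R : ℝ) (hroots : ∀ j, r j ∈ ball c R)
    (δ : ℝ) (hδ0 : 0 < δ) (hδ : δ < 1 / s) :
    IntegrableOn (fun z : ℂ => 1 / ‖∏ j, (z - r j)‖ ^ δ)
      (ball c R) volume :=
  integrable_inv_abs_monic_poly_rpow_general s r c R δ hδ
end

section
/- Let f₁,…,f_m be monomials in ℂⁿ, f_j = ζ^{α_j} for multi-indices α_j. Then the quotient |∂f₁ ∧ ⋯ ∧ ∂f_m| / (|f₁|⋯|f_m|) is integrable on any bounded polydisk in ℂⁿ. -/
noncomputable section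
open MeasureTheory Set Metric Finset

noncomputable section
open MeasureTheory Set Metric

private lemma aux_ii0 (t : ℝ) (ht : 0 ≤ t) :
    IntervalIntegrable (fun x : ℝ => |x| ^ (-(1/2) : ℝ)) volume 0 t := by
  rw [intervalIntegrable_iff_integrableOn_Ioc_of_le ht]
  have h : IntervalIntegrable (fun x : ℝ => x ^ (-(1/2) : ℝ)) volume 0 t :=
    intervalIntegral.intervalIntegrable_rpow' (by norm_num)
  rw [intervalIntegrable_iff_integrableOn_Ioc_of_le ht] at h
  exact h.congr_fun (fun x hx => by rw [abs_of_pos hx.1]) measurableSet_Ioc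

private lemma aux_ii (t : ℝ) :
    IntervalIntegrable (fun x : ℝ => |x| ^ (-(1/2) : ℝ)) volume 0 t := by
  rcases le_or_gt 0 t with ht | ht
  · exact aux_ii0 t ht
  · rw [IntervalIntegrable.iff_comp_neg]
    simp only [abs_neg, neg_zero]
    exact aux_ii0 (-t) (by linarith)

private lemma aux_g_int (r : ℝ) :
    Integrable ((Set.Ioo (-r) r).indicator (fun x : ℝ => |x| ^ (-(1/2) : ℝ))) := by
  rw [integrable_indicator_iff measurableSet_Ioo]
  have h := (aux_ii (-r)).symm.trans (aux_ii r)
  rw [intervalIntegrable_iff] at h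
  exact h.mono_set (fun x hx => Set.mem_uIoc.mpr (Or.inl ⟨hx.1, hx.2.le⟩))

private lemma aux_ae_re : ∀ᵐ w : ℂ ∂volume, w.re ≠ 0 := by
  rw [ae_iff]
  simp only [ne_eq, not_not]
  have h1 : {w : ℂ | w.re = 0} = Complex.measurableEquivRealProd ⁻¹' (({0} : Set ℝ) ×ˢ univ) := by
    ext w; simp [eq_comm]
  rw [h1, Complex.volume_preserving_equiv_real_prod.measure_preimage_equiv]
  rw [MeasureTheory.Measure.volume_eq_prod, Measure.prod_prod]
  simp

private lemma aux_ae_im : ∀ᵐ w : ℂ ∂volume, w.im ≠ 0 := by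
  rw [ae_iff]
  simp only [ne_eq, not_not]
  have h1 : {w : ℂ | w.im = 0} = Complex.measurableEquivRealProd ⁻¹' (univ ×ˢ ({0} : Set ℝ)) := by
    ext w; simp [eq_comm]
  rw [h1, Complex.volume_preserving_equiv_real_prod.measure_preimage_equiv]
  rw [MeasureTheory.Measure.volume_eq_prod, Measure.prod_prod]
  simp

private lemma aux_int_inv_abs (r : ℝ) :
    IntegrableOn (fun w : ℂ => (‖w‖)⁻¹) (ball (0:ℂ) r) volume := by
  set g : ℝ → ℝ := (Set.Ioo (-r) r).indicator (fun x : ℝ => |x| ^ (-(1/2) : ℝ)) with hgdef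
  have hg0 : ∀ x, 0 ≤ g x := by
    intro x
    exact Set.indicator_nonneg (fun y _ => Real.rpow_nonneg (abs_nonneg y) _) x
  have hH : Integrable (fun p : ℝ × ℝ => g p.1 * g p.2) := by
    rw [MeasureTheory.Measure.volume_eq_prod]
    exact (aux_g_int r).mul_prod (aux_g_int r)
  have hG : Integrable (fun w : ℂ => g w.re * g w.im) := by
    have := (Complex.volume_preserving_equiv_real_prod.integrable_comp_emb
      Complex.measurableEquivRealProd.measurableEmbedding).2 hH
    simpa [Function.comp_def] using this
  apply Integrable.mono' hG.integrableOn
    (continuous_norm.measurable.inv.aestronglyMeasurable)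
  filter_upwards [ae_restrict_mem measurableSet_ball,
    ae_restrict_of_ae (aux_ae_re.and aux_ae_im)] with w hw hne
  have habs : ‖w‖ < r := by
    rwa [mem_ball_zero_iff] at hw
  have hre : w.re ∈ Set.Ioo (-r) r := by
    have := abs_lt.mp ((Complex.abs_re_le_norm w).trans_lt habs)
    exact ⟨this.1, this.2⟩
  have him : w.im ∈ Set.Ioo (-r) r := by
    have := abs_lt.mp ((Complex.abs_im_le_norm w).trans_lt habs)
    exact ⟨this.1, this.2⟩
  have ha : 0 < |w.re| := abs_pos.mpr hne.1
  have hb : 0 < |w.im| := abs_pos.mpr hne.2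
  have hkey : Real.sqrt (|w.re| * |w.im|) ≤ ‖w‖ := by
    rw [Complex.norm_def, Complex.normSq_apply]
    apply Real.sqrt_le_sqrt
    nlinarith [sq_nonneg (|w.re| - |w.im|), sq_abs w.re, sq_abs w.im]
  have hsq : Real.sqrt (|w.re| * |w.im|) = |w.re| ^ ((1:ℝ)/2) * |w.im| ^ ((1:ℝ)/2) := by
    rw [Real.sqrt_eq_rpow, Real.mul_rpow ha.le hb.le]
  have hpos : 0 < Real.sqrt (|w.re| * |w.im|) :=
    Real.sqrt_pos.mpr (mul_pos ha hb)
  calc ‖(‖w‖)⁻¹‖ = (‖w‖)⁻¹ := by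
        rw [Real.norm_eq_abs, abs_of_nonneg (inv_nonneg.mpr (norm_nonneg w))]
    _ ≤ (Real.sqrt (|w.re| * |w.im|))⁻¹ := by
        exact inv_anti₀ hpos hkey
    _ = |w.re| ^ (-(1/2) : ℝ) * |w.im| ^ (-(1/2) : ℝ) := by
        rw [hsq, mul_inv, ← Real.rpow_neg ha.le, ← Real.rpow_neg hb.le]
    _ = g w.re * g w.im := by
        rw [hgdef, Set.indicator_of_mem hre, Set.indicator_of_mem him]

private lemma aux_int_one_add (r : ℝ) :
    IntegrableOn (fun w : ℂ => 1 + (‖w‖)⁻¹) (ball (0:ℂ) r) volume := by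
  exact (integrableOn_const measure_ball_lt_top.ne).add (aux_int_inv_abs r)

open MeasureTheory Finset

private lemma aux_hasfderiv {n : ℕ} (a : Fin n → ℕ) (z : Fin n → ℂ) :
    HasFDerivAt (fun ζ : Fin n → ℂ => ∏ l, ζ l ^ a l)
      (∑ l, (∏ l' ∈ Finset.univ.erase l, z l' ^ a l') •
        (((a l : ℂ) * z l ^ (a l - 1)) • (ContinuousLinearMap.proj l : (Fin n → ℂ) →L[ℂ] ℂ))) z := by
  exact HasFDerivAt.finset_prod (fun l _ =>
    (hasDerivAt_pow (a l) (z l)).comp_hasFDerivAt z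
      ((ContinuousLinearMap.proj l : (Fin n → ℂ) →L[ℂ] ℂ).hasFDerivAt))

private lemma aux_entry_eq {n : ℕ} (a : Fin n → ℕ) (z : Fin n → ℂ) (k : Fin n) :
    fderiv ℂ (fun ζ : Fin n → ℂ => ∏ l, ζ l ^ a l) z (Pi.single k 1)
      = (∏ l ∈ Finset.univ.erase k, z l ^ a l) * ((a k : ℂ) * z k ^ (a k - 1)) := by
  rw [(aux_hasfderiv a z).fderiv, ContinuousLinearMap.sum_apply]
  rw [Finset.sum_eq_single k]
  · simp [smul_eq_mul]
  · intro b _ hb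
    simp [Pi.single_eq_of_ne hb]
  · simp

private lemma aux_entry_mul {n : ℕ} (a : Fin n → ℕ) (z : Fin n → ℂ) (k : Fin n) :
    fderiv ℂ (fun ζ : Fin n → ℂ => ∏ l, ζ l ^ a l) z (Pi.single k 1) * z k
      = (a k : ℂ) * ∏ l, z l ^ a l := by
  rw [aux_entry_eq]
  rcases Nat.eq_zero_or_pos (a k) with h | h
  · simp [h]
  · have hz : z k ^ (a k - 1) * z k = z k ^ a k := by
      rw [← pow_succ, Nat.sub_add_cancel h]
    calc (∏ l ∈ Finset.univ.erase k, z l ^ a l) * ((a k : ℂ) * z k ^ (a k - 1)) * z k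
        = (a k : ℂ) * ((∏ l ∈ Finset.univ.erase k, z l ^ a l) * (z k ^ (a k - 1) * z k)) := by
          ring
      _ = (a k : ℂ) * ∏ l, z l ^ a l := by
          rw [hz, Finset.prod_erase_mul _ _ (Finset.mem_univ k)]

private lemma aux_entry_div {n : ℕ} (a : Fin n → ℕ) (z : Fin n → ℂ) (k : Fin n)
    (hz : z k ≠ 0) :
    fderiv ℂ (fun ζ : Fin n → ℂ => ∏ l, ζ l ^ a l) z (Pi.single k 1)
      = (∏ l, z l ^ a l) * ((z k)⁻¹ * (a k : ℂ)) := by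
  have h := aux_entry_mul a z k
  field_simp
  linear_combination h

private lemma aux_det_eq {n m : ℕ} (α : Fin m → Fin n → ℕ) (z : Fin n → ℂ)
    (hz : ∀ k, z k ≠ 0) (κ : Fin m → Fin n) :
    Matrix.det (Matrix.of fun i j : Fin m =>
        fderiv ℂ (fun ζ : Fin n → ℂ => ∏ l, ζ l ^ α i l) z (Pi.single (κ j) 1))
      = (∏ i, ∏ l, z l ^ α i l) * ((∏ j, (z (κ j))⁻¹) *
          Matrix.det (Matrix.of fun i j : Fin m => (α i (κ j) : ℂ))) := by
  have h1 : (Matrix.of fun i j : Fin m =>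
      fderiv ℂ (fun ζ : Fin n → ℂ => ∏ l, ζ l ^ α i l) z (Pi.single (κ j) 1))
      = Matrix.of fun i j : Fin m => (fun i => ∏ l, z l ^ α i l) i *
          (Matrix.of fun i j : Fin m => (z (κ j))⁻¹ * (α i (κ j) : ℂ)) i j := by
    ext i j
    simp only [Matrix.of_apply]
    exact aux_entry_div (α i) z (κ j) (hz (κ j))
  rw [h1, Matrix.det_mul_column]
  congr 1
  have h2 : (Matrix.of fun i j : Fin m => (z (κ j))⁻¹ * (α i (κ j) : ℂ))
      = Matrix.of fun i j : Fin m => (fun j => (z (κ j))⁻¹) j *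
          (Matrix.of fun i j : Fin m => (α i (κ j) : ℂ)) i j := rfl
  rw [h2, Matrix.det_mul_row]

/-- The squared pointwise norm `|∂f₁ ∧ ⋯ ∧ ∂f_m|²` of the (m,0)-form
`∂f₁ ∧ ⋯ ∧ ∂f_m`. -/
def wedgeNormSq (n m : ℕ) (f : Fin m → (Fin n → ℂ) → ℂ) (z : Fin n → ℂ) : ℝ :=
  ∑ K ∈ (Finset.univ.powersetCard m : Finset (Finset (Fin n))).attach,
    Complex.normSq (Matrix.det (Matrix.of fun i j : Fin m =>
      fderiv ℂ (f i) z
        (Pi.single ((K.1.orderIsoOfFin ((Finset.mem_powersetCard.mp K.2).2) j : Fin n)) 1)))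


private lemma aux_pointwise {n m : ℕ} (α : Fin m → Fin n → ℕ) (z : Fin n → ℂ)
    (hz : ∀ k, z k ≠ 0) :
    Real.sqrt (wedgeNormSq n m (fun j ζ => ∏ k, ζ k ^ α j k) z) /
        ∏ j, ‖∏ k, z k ^ α j k‖
      ≤ (∑ K ∈ (Finset.univ.powersetCard m : Finset (Finset (Fin n))).attach,
           ‖Matrix.det (Matrix.of fun i j : Fin m =>
             (α i ((K.1.orderIsoOfFin ((Finset.mem_powersetCard.mp K.2).2) j : Fin n)) : ℂ))‖)
        * ∏ k, (1 + (‖z k‖)⁻¹) := by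
  set A := (Finset.univ.powersetCard m : Finset (Finset (Fin n))).attach with hA
  set P : ℝ := ∏ k, (1 + (‖z k‖)⁻¹) with hP
  set D : ℝ := ∏ j, ‖∏ k, z k ^ α j k‖ with hD
  have hfj : ∀ j, (∏ k, z k ^ α j k) ≠ 0 := fun j =>
    Finset.prod_ne_zero_iff.mpr (fun k _ => pow_ne_zero _ (hz k))
  have hDpos : 0 < D :=
    Finset.prod_pos fun j _ => norm_pos_iff.mpr (hfj j)
  have hPone : ∀ (s : Finset (Fin n)), (1:ℝ) ≤ ∏ k ∈ s, (1 + (‖z k‖)⁻¹) := by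
    intro s
    have h := Finset.prod_le_prod (s := s) (f := fun _ => (1:ℝ))
      (g := fun k => 1 + (‖z k‖)⁻¹) (fun _ _ => zero_le_one)
      (fun k _ => by
        have : (0:ℝ) ≤ (‖z k‖)⁻¹ := inv_nonneg.mpr (norm_nonneg _)
        linarith)
    simpa using h
  have hPK : ∀ (K : Finset (Fin n)), ∏ k ∈ K, (‖z k‖)⁻¹ ≤ P := by
    intro K
    calc ∏ k ∈ K, (‖z k‖)⁻¹
        ≤ ∏ k ∈ K, (1 + (‖z k‖)⁻¹) := by
          apply Finset.prod_le_prod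
          · intro k _; exact inv_nonneg.mpr (norm_nonneg _)
          · intro k _
            have : (0:ℝ) ≤ (‖z k‖)⁻¹ := inv_nonneg.mpr (norm_nonneg _)
            linarith
      _ ≤ P := by
          rw [hP, ← Finset.prod_sdiff (Finset.subset_univ K)]
          exact le_mul_of_one_le_left
            (Finset.prod_nonneg fun k _ => by positivity)
            (hPone (Finset.univ \ K))
  rw [div_le_iff₀ hDpos]
  have step1 : Real.sqrt (wedgeNormSq n m (fun j ζ => ∏ k, ζ k ^ α j k) z)
      ≤ ∑ K ∈ A, ‖Matrix.det (Matrix.of fun i j : Fin m =>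
          fderiv ℂ (fun ζ : Fin n → ℂ => ∏ l, ζ l ^ α i l) z
            (Pi.single ((K.1.orderIsoOfFin ((Finset.mem_powersetCard.mp K.2).2) j : Fin n)) 1))‖ := by
    have h1 : wedgeNormSq n m (fun j ζ => ∏ k, ζ k ^ α j k) z
        = ∑ K ∈ A, (‖Matrix.det (Matrix.of fun i j : Fin m =>
            fderiv ℂ (fun ζ : Fin n → ℂ => ∏ l, ζ l ^ α i l) z
              (Pi.single ((K.1.orderIsoOfFin ((Finset.mem_powersetCard.mp K.2).2) j : Fin n)) 1))‖) ^ 2 := by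
      unfold wedgeNormSq
      exact Finset.sum_congr rfl fun K _ => (Complex.sq_norm _).symm
    rw [h1]
    have h2 := Finset.sum_sq_le_sq_sum_of_nonneg
      (s := A) (f := fun K => ‖Matrix.det (Matrix.of fun i j : Fin m =>
        fderiv ℂ (fun ζ : Fin n → ℂ => ∏ l, ζ l ^ α i l) z
          (Pi.single ((K.1.orderIsoOfFin ((Finset.mem_powersetCard.mp K.2).2) j : Fin n)) 1))‖)
      (fun K _ => norm_nonneg _)
    calc Real.sqrt _ ≤ Real.sqrt ((∑ K ∈ A, ‖Matrix.det (Matrix.of fun i j : Fin m =>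
          fderiv ℂ (fun ζ : Fin n → ℂ => ∏ l, ζ l ^ α i l) z
            (Pi.single ((K.1.orderIsoOfFin ((Finset.mem_powersetCard.mp K.2).2) j : Fin n)) 1))‖) ^ 2) :=
          Real.sqrt_le_sqrt h2
      _ = _ := Real.sqrt_sq (Finset.sum_nonneg fun K _ => norm_nonneg _)
  refine step1.trans ?_
  rw [Finset.sum_mul, Finset.sum_mul]
  apply Finset.sum_le_sum
  intro K _
  have hcard := (Finset.mem_powersetCard.mp K.2).2
  set κ : Fin m → Fin n := fun j => (K.1.orderIsoOfFin hcard j : Fin n) with hκ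
  have hdet := aux_det_eq α z hz κ
  have habs : ‖Matrix.det (Matrix.of fun i j : Fin m =>
      fderiv ℂ (fun ζ : Fin n → ℂ => ∏ l, ζ l ^ α i l) z (Pi.single (κ j) 1))‖
      = D * ((∏ j, (‖z (κ j)‖)⁻¹) *
          ‖Matrix.det (Matrix.of fun i j : Fin m => (α i (κ j) : ℂ))‖) := by
    rw [hdet, norm_mul, norm_mul]
    congr 1
    · rw [hD, norm_prod]
      try exact Finset.prod_congr rfl fun i _ => (norm_prod _ _)
    · congr 1
      rw [norm_prod]
      try exact Finset.prod_congr rfl fun j _ => norm_inv _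
  have hreindex : (∏ j, (‖z (κ j)‖)⁻¹) = ∏ k ∈ K.1, (‖z k‖)⁻¹ := by
    rw [← Finset.prod_coe_sort K.1 (fun k => (‖z k‖)⁻¹)]
    exact Equiv.prod_comp (K.1.orderIsoOfFin hcard).toEquiv
      (fun x : K.1 => (‖z (x : Fin n)‖)⁻¹)
  rw [habs, hreindex]
  have hc0 : (0:ℝ) ≤ ‖Matrix.det (Matrix.of fun i j : Fin m => (α i (κ j) : ℂ))‖ :=
    norm_nonneg _
  calc D * ((∏ k ∈ K.1, (‖z k‖)⁻¹) *
        ‖Matrix.det (Matrix.of fun i j : Fin m => (α i (κ j) : ℂ))‖)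
      ≤ D * (P * ‖Matrix.det (Matrix.of fun i j : Fin m => (α i (κ j) : ℂ))‖) := by
        apply mul_le_mul_of_nonneg_left _ hDpos.le
        exact mul_le_mul_of_nonneg_right (hPK K.1) hc0
    _ = ‖Matrix.det (Matrix.of fun i j : Fin m => (α i (κ j) : ℂ))‖ * P * D := by
        ring


theorem main_estimate_monomials (n m : ℕ) (α : Fin m → Fin n → ℕ) (R : Fin n → ℝ) :
    IntegrableOn
      (fun z => Real.sqrt (wedgeNormSq n m (fun j ζ => ∏ k, ζ k ^ α j k) z) /
        ∏ j, ‖∏ k, z k ^ α j k‖)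
      {ζ : Fin n → ℂ | ∀ k, ‖ζ k‖ < R k} volume := by
  set S := {ζ : Fin n → ℂ | ∀ k, ‖ζ k‖ < R k} with hSdef
  have hSm : MeasurableSet S := by
    have : S = ⋂ k, {ζ : Fin n → ℂ | ‖ζ k‖ < R k} := by
      ext ζ; simp [hSdef, Set.mem_iInter]
    rw [this]
    exact MeasurableSet.iInter fun k =>
      measurableSet_lt ((continuous_norm.comp (continuous_apply k)).measurable)
        measurable_const
  set C : ℝ := ∑ K ∈ (Finset.univ.powersetCard m : Finset (Finset (Fin n))).attach,
      ‖Matrix.det (Matrix.of fun i j : Fin m =>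
        (α i ((K.1.orderIsoOfFin ((Finset.mem_powersetCard.mp K.2).2) j : Fin n)) : ℂ))‖ with hC
  have hC0 : 0 ≤ C := Finset.sum_nonneg fun K _ => norm_nonneg _
  set φ : Fin n → ℂ → ℝ :=
    fun k => (Metric.ball (0:ℂ) (R k)).indicator (fun w => 1 + (‖w‖)⁻¹) with hφdef
  have hφ : ∀ k, Integrable (φ k) := fun k =>
    (integrable_indicator_iff measurableSet_ball).2 (aux_int_one_add (R k))
  have hg : Integrable (fun z : Fin n → ℂ => C * ∏ k, φ k (z k)) :=
    (Integrable.fintype_prod hφ).const_mul C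
  have hne : ∀ᵐ z : Fin n → ℂ ∂volume, ∀ k, z k ≠ 0 := by
    rw [MeasureTheory.ae_all_iff]
    intro k
    have h := MeasureTheory.Measure.ae_eval_ne (fun _ : Fin n => (volume : Measure ℂ)) k 0
    rwa [← MeasureTheory.volume_pi] at h
  -- measurability
  have hnum : Measurable fun z : Fin n → ℂ =>
      Real.sqrt (wedgeNormSq n m (fun j ζ => ∏ k, ζ k ^ α j k) z) := by
    apply Real.continuous_sqrt.measurable.comp
    have heq : wedgeNormSq n m (fun j ζ => ∏ k, ζ k ^ α j k)
        = fun z : Fin n → ℂ => ∑ K ∈ (Finset.univ.powersetCard m : Finset (Finset (Fin n))).attach,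
            Complex.normSq (Matrix.det (Matrix.of fun i j : Fin m =>
              (∏ l ∈ Finset.univ.erase
                  ((K.1.orderIsoOfFin ((Finset.mem_powersetCard.mp K.2).2) j : Fin n)),
                z l ^ α i l) *
              ((α i ((K.1.orderIsoOfFin ((Finset.mem_powersetCard.mp K.2).2) j : Fin n)) : ℂ) *
                z ((K.1.orderIsoOfFin ((Finset.mem_powersetCard.mp K.2).2) j : Fin n)) ^
                  (α i ((K.1.orderIsoOfFin ((Finset.mem_powersetCard.mp K.2).2) j : Fin n)) - 1)))) := by
      funext z
      unfold wedgeNormSq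
      refine Finset.sum_congr rfl fun K _ => ?_
      have hM : (Matrix.of fun i j : Fin m =>
          fderiv ℂ (fun ζ : Fin n → ℂ => ∏ l, ζ l ^ α i l) z
            (Pi.single ((K.1.orderIsoOfFin ((Finset.mem_powersetCard.mp K.2).2) j : Fin n)) 1))
          = Matrix.of fun i j : Fin m =>
              (∏ l ∈ Finset.univ.erase
                  ((K.1.orderIsoOfFin ((Finset.mem_powersetCard.mp K.2).2) j : Fin n)),
                z l ^ α i l) *
              ((α i ((K.1.orderIsoOfFin ((Finset.mem_powersetCard.mp K.2).2) j : Fin n)) : ℂ) *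
                z ((K.1.orderIsoOfFin ((Finset.mem_powersetCard.mp K.2).2) j : Fin n)) ^
                  (α i ((K.1.orderIsoOfFin ((Finset.mem_powersetCard.mp K.2).2) j : Fin n)) - 1)) := by
        ext i j
        exact aux_entry_eq (α i) z _
      rw [hM]
    rw [heq]
    apply Continuous.measurable
    apply continuous_finset_sum
    intro K _
    apply Complex.continuous_normSq.comp
    apply Continuous.matrix_det
    apply continuous_pi; intro i; apply continuous_pi; intro j
    exact (continuous_finset_prod _ fun l _ => (continuous_apply l).pow _).mul
      (continuous_const.mul ((continuous_apply _).pow _))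
  have hden : Measurable fun z : Fin n → ℂ => ∏ j, ‖∏ k, z k ^ α j k‖ := by
    apply Continuous.measurable
    exact continuous_finset_prod _ fun j _ =>
      continuous_norm.comp (continuous_finset_prod _ fun k _ => (continuous_apply k).pow _)
  apply Integrable.mono' hg.integrableOn ((hnum.div hden).aestronglyMeasurable)
  filter_upwards [ae_restrict_mem hSm, ae_restrict_of_ae hne] with z hzS hzne
  have hFnn : 0 ≤ Real.sqrt (wedgeNormSq n m (fun j ζ => ∏ k, ζ k ^ α j k) z) /
      ∏ j, ‖∏ k, z k ^ α j k‖ :=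
    div_nonneg (Real.sqrt_nonneg _) (Finset.prod_nonneg fun j _ => norm_nonneg _)
  rw [Real.norm_eq_abs, Pi.div_apply, abs_of_nonneg hFnn]
  have hφeq : ∏ k, φ k (z k) = ∏ k, (1 + (‖z k‖)⁻¹) := by
    refine Finset.prod_congr rfl fun k _ => ?_
    rw [hφdef]
    exact Set.indicator_of_mem
      (by rw [mem_ball_zero_iff]; exact hzS k) _
  calc Real.sqrt (wedgeNormSq n m (fun j ζ => ∏ k, ζ k ^ α j k) z) /
        ∏ j, ‖∏ k, z k ^ α j k‖
      ≤ C * ∏ k, (1 + (‖z k‖)⁻¹) := aux_pointwise α z hzne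
    _ = C * ∏ k, φ k (z k) := by rw [hφeq]
end
end
end
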